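/- arXiv:1609.05044 — 2 statements merged into one kernel-verified Lean document; each statement's English description precedes it below -/
import Mathlib

section
/- If f, g, h ∈ SL(2,C) with tr²(f) = 2, |tr[f,g] − 1| = 1, and h f h⁻¹ = f g⁻¹ f⁻¹, then |tr²(f) − 2| + |tr[f,h] − 1| = 1. -/
open Matrix Complex
open scoped commutatorElement

noncomputable def tr (M : Matrix.SpecialLinearGroup (Fin 2) ℂ) : ℂ :=
  Matrix.trace (M : Matrix (Fin 2) (Fin 2) ℂ)

/-!
Write `x = tr f`, `y = tr h`, `z = tr (f h)`. The Fricke identity gives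
`tr [f, h] = x² + y² + z² - x y z - 2`, and applied to the pair `f`, `h f h⁻¹` (whose product has
trace `u = x y z - y² - z² + 2`) it gives `tr [f, h f h⁻¹] = 2 x² + u² - x² u - 2`. When `x² = 2`
both are controlled by `u`: `tr [f, h] - 1 = 1 - u` and `tr [f, h f h⁻¹] - 1 = (u - 1)²`.
On the other hand `[f, f g⁻¹ f⁻¹]` is conjugate to `[f, g]⁻¹`, so the hypothesis
`h f h⁻¹ = f g⁻¹ f⁻¹` turns `|tr [f, g] - 1| = 1` into `|tr [f, h] - 1|² = 1`.
-/

theorem commutatorElement_self_mul_inv_mul_inv {G : Type*} [Group G] (a b : G) :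
    ⁅a, a * b⁻¹ * a⁻¹⁆ = (a * b⁻¹) * ⁅a, b⁆⁻¹ * (a * b⁻¹)⁻¹ := by
  simp only [commutatorElement_def]
  group

namespace Matrix.SpecialLinearGroup

variable {R : Type*} [CommRing R]

theorem trace_conj {n : Type*} [Fintype n] [DecidableEq n] (a b : SpecialLinearGroup n R) :
    trace (↑(a * b * a⁻¹) : Matrix n n R) = trace (b : Matrix n n R) := by
  rw [coe_mul, trace_mul_comm, coe_mul, ← Matrix.mul_assoc, ← coe_mul, inv_mul_cancel, coe_one,
    Matrix.one_mul]

local notation "τ" x:max => trace ((x : SpecialLinearGroup (Fin 2) R) : Matrix (Fin 2) (Fin 2) R)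

theorem trace_inv_fin_two (a : SpecialLinearGroup (Fin 2) R) : τ a⁻¹ = τ a := by
  simp only [coe_inv, adjugate_fin_two, trace_fin_two, of_apply, cons_val', cons_val_zero,
    cons_val_one, empty_val', cons_val_fin_one]
  ring

theorem trace_mul_add_trace_mul_inv (a b : SpecialLinearGroup (Fin 2) R) :
    τ (a * b) + τ (a * b⁻¹) = τ a * τ b := by
  have hb := b.2
  rw [det_fin_two] at hb
  simp only [coe_mul, coe_inv, adjugate_fin_two, trace_fin_two, mul_apply, Fin.sum_univ_two,
    of_apply, cons_val', cons_val_zero, cons_val_fin_one, cons_val_one]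
  ring

theorem trace_mul_self (b : SpecialLinearGroup (Fin 2) R) : τ (b * b) = τ b ^ 2 - 2 := by
  have h := trace_mul_add_trace_mul_inv b b
  rw [mul_inv_cancel, coe_one, trace_one, Fintype.card_fin] at h
  linear_combination h

theorem trace_commutatorElement (a b : SpecialLinearGroup (Fin 2) R) :
    τ ⁅a, b⁆ = τ a ^ 2 + τ b ^ 2 + τ (a * b) ^ 2 - τ a * τ b * τ (a * b) - 2 := by
  have ha := a.2
  have hb := b.2
  rw [det_fin_two] at ha hb
  simp only [commutatorElement_def, coe_mul, coe_inv, adjugate_fin_two, trace_fin_two, mul_apply,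
    Fin.sum_univ_two, of_apply, cons_val', cons_val_fin_one, cons_val_zero, cons_val_one]
  linear_combination ((b 0 0 + b 1 1) ^ 2 - 2) * ha
    + ((a 0 0 + a 1 1) ^ 2 - 2 * (a 0 0 * a 1 1 - a 0 1 * a 1 0)) * hb

theorem trace_mul_conj (a b : SpecialLinearGroup (Fin 2) R) :
    τ (a * (b * a * b⁻¹)) = τ a * τ b * τ (a * b) - τ b ^ 2 - τ (a * b) ^ 2 + 2 := by
  have h := trace_mul_add_trace_mul_inv (a * b) (a * b⁻¹)
  rw [show a * b * (a * b⁻¹) = a * (b * a * b⁻¹) by group,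
    show a * b * (a * b⁻¹)⁻¹ = a * (b * b) * a⁻¹ by group, trace_conj, trace_mul_self] at h
  linear_combination h + τ (a * b) * trace_mul_add_trace_mul_inv a b

theorem trace_commutatorElement_conj_sub_one {a : SpecialLinearGroup (Fin 2) R}
    (ha : τ a ^ 2 = 2) (b : SpecialLinearGroup (Fin 2) R) :
    τ ⁅a, b * a * b⁻¹⁆ - 1 = (τ ⁅a, b⁆ - 1) ^ 2 := by
  have hconj := trace_commutatorElement a (b * a * b⁻¹)
  rw [trace_conj] at hconj
  have hu := trace_mul_conj a b
  set u := τ (a * (b * a * b⁻¹))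
  have hcomm : τ ⁅a, b⁆ - 1 = 1 - u := by
    linear_combination trace_commutatorElement a b + hu + ha
  rw [hcomm]
  linear_combination hconj + (2 - u) * ha

theorem trace_commutatorElement_self_mul_inv_mul_inv (a b : SpecialLinearGroup (Fin 2) R) :
    τ ⁅a, a * b⁻¹ * a⁻¹⁆ = τ ⁅a, b⁆ := by
  rw [commutatorElement_self_mul_inv_mul_inv, trace_conj, trace_inv_fin_two]

end Matrix.SpecialLinearGroup

theorem gmt_case_iii (f g h : Matrix.SpecialLinearGroup (Fin 2) ℂ)
    (hf : (tr f) ^ 2 = 2)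
    (hfg : ‖tr ⁅f, g⁆ - 1‖ = 1)
    (hh : h * f * h⁻¹ = f * g⁻¹ * f⁻¹) :
    ‖(tr f) ^ 2 - 2‖ + ‖tr ⁅f, h⁆ - 1‖ = 1 := by
  have hsq : ‖tr ⁅f, h⁆ - 1‖ ^ 2 = 1 := by
    rw [← norm_pow, ← hfg]
    unfold tr at hf ⊢
    rw [← SpecialLinearGroup.trace_commutatorElement_conj_sub_one hf, hh,
      SpecialLinearGroup.trace_commutatorElement_self_mul_inv_mul_inv]
  rw [hf, sub_self, norm_zero, zero_add]
  exact (pow_eq_one_iff_of_nonneg (norm_nonneg _) two_ne_zero).mp hsq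
end

section
/- Let n ≥ 4, d ∈ ℂ with cosh(d) = (1/4)(1 + cot²(π/n) − i√(3cot⁴(π/n) + 14cot²(π/n) − 5)), and define ρ_n, b_n as in the standard representation of the figure-eight orbifold group. Then for any real λ, |tr[ρ_n, b_n] − λ| = √((λ² − 3λ + 3) + 4(λ − 1)sin²(π/n)). -/
open Matrix Complex Real

noncomputable def rhoMat (n : ℕ) (d : ℂ) : Matrix (Fin 2) (Fin 2) ℂ :=
  !![Complex.cos ((Real.pi : ℂ) / n), Complex.I * Complex.exp (d / 2) * Complex.sin ((Real.pi : ℂ) / n);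
     Complex.I * Complex.exp (-d / 2) * Complex.sin ((Real.pi : ℂ) / n), Complex.cos ((Real.pi : ℂ) / n)]

noncomputable def bMat (n : ℕ) (d : ℂ) : Matrix (Fin 2) (Fin 2) ℂ :=
  !![Complex.cos ((Real.pi : ℂ) / n), Complex.I * Complex.exp (-d / 2) * Complex.sin ((Real.pi : ℂ) / n);
     Complex.I * Complex.exp (d / 2) * Complex.sin ((Real.pi : ℂ) / n), Complex.cos ((Real.pi : ℂ) / n)]

noncomputable def cotPi (n : ℕ) : ℝ := Real.cos (Real.pi / n) / Real.sin (Real.pi / n)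

/-
Fricke's identity tr[A,B] = tr²A + tr²B + tr²(AB) − trA·trB·tr(AB) − 2 on SL₂, together with
tr ρₙ = tr bₙ = 2cos(π/n) and tr(ρₙbₙ) = 2cos²(π/n) − 2sin²(π/n)·cosh d, collapses the trace of the
commutator to 2 + 4sin⁴(π/n)(cosh²d − 1). Writing k = cot(π/n) and Δ = 3k⁴ + 14k² − 5 = (3k² − 1)(k² + 5),
the prescribed cosh d gives cosh²d − 1 = −(k² + 1)(k² + 5 + i√Δ)/8, so
tr[ρₙ,bₙ] = 3/2 − 2sin²(π/n) − (i/2)sin²(π/n)√Δ, and its distance to λ is a direct computation.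
For n ≥ 4 we have k ≥ 1, so Δ ≥ 0 and √Δ is a genuine square root.
-/

theorem Matrix.trace_mul_mul_adjugate_mul_adjugate_fin_two {R : Type*} [CommRing R]
    (A B : Matrix (Fin 2) (Fin 2) R) :
    trace (A * B * adjugate A * adjugate B) = B.det * trace A ^ 2 + A.det * trace B ^ 2 +
      trace (A * B) ^ 2 - trace A * trace B * trace (A * B) - 2 * A.det * B.det := by
  simp only [trace_fin_two, adjugate_fin_two, det_fin_two, mul_apply, Fin.sum_univ_two, of_apply,
    cons_val', cons_val_zero, cons_val_one, empty_val', cons_val_fin_one]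
  ring

theorem Matrix.trace_mul_mul_inv_mul_inv_fin_two {R : Type*} [CommRing R]
    {A B : Matrix (Fin 2) (Fin 2) R} (hA : A.det = 1) (hB : B.det = 1) :
    trace (A * B * A⁻¹ * B⁻¹) =
      trace A ^ 2 + trace B ^ 2 + trace (A * B) ^ 2 - trace A * trace B * trace (A * B) - 2 := by
  rw [inv_def, inv_def, hA, hB, Ring.inverse_one, one_smul, one_smul,
    trace_mul_mul_adjugate_mul_adjugate_fin_two, hA, hB]
  ring

theorem Complex.exp_half_mul_exp_neg_half (z : ℂ) : cexp (z / 2) * cexp (-z / 2) = 1 := by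
  rw [← Complex.exp_add, neg_div, add_neg_cancel, Complex.exp_zero]

theorem Complex.exp_half_sq_add_exp_neg_half_sq (z : ℂ) :
    cexp (z / 2) ^ 2 + cexp (-z / 2) ^ 2 = 2 * Complex.cosh z := by
  rw [Complex.two_cosh, ← Complex.exp_nat_mul, ← Complex.exp_nat_mul]
  push_cast
  ring_nf

section FigureEight

variable (n : ℕ) (d : ℂ)

theorem det_rhoMat : (rhoMat n d).det = 1 := by
  rw [rhoMat, det_fin_two_of]
  linear_combination Complex.cos_sq_add_sin_sq ((π : ℂ) / n) +
    Complex.sin ((π : ℂ) / n) ^ 2 * Complex.exp_half_mul_exp_neg_half d -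
    Complex.sin ((π : ℂ) / n) ^ 2 * cexp (d / 2) * cexp (-d / 2) * I_sq

theorem det_bMat : (bMat n d).det = 1 := by
  rw [bMat, det_fin_two_of]
  linear_combination Complex.cos_sq_add_sin_sq ((π : ℂ) / n) +
    Complex.sin ((π : ℂ) / n) ^ 2 * Complex.exp_half_mul_exp_neg_half d -
    Complex.sin ((π : ℂ) / n) ^ 2 * cexp (d / 2) * cexp (-d / 2) * I_sq

theorem trace_rhoMat : trace (rhoMat n d) = 2 * Complex.cos (π / n) := by
  rw [rhoMat, trace_fin_two_of]
  ring

theorem trace_bMat : trace (bMat n d) = 2 * Complex.cos (π / n) := by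
  rw [bMat, trace_fin_two_of]
  ring

theorem trace_rhoMat_mul_bMat :
    trace (rhoMat n d * bMat n d) =
      2 * Complex.cos (π / n) ^ 2 - 2 * Complex.sin (π / n) ^ 2 * Complex.cosh d := by
  rw [rhoMat, bMat, mul_fin_two, trace_fin_two_of]
  linear_combination -Complex.sin ((π : ℂ) / n) ^ 2 * Complex.exp_half_sq_add_exp_neg_half_sq d +
    Complex.sin ((π : ℂ) / n) ^ 2 * (cexp (d / 2) ^ 2 + cexp (-d / 2) ^ 2) * I_sq

theorem trace_rhoMat_mul_bMat_mul_inv_mul_inv :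
    trace (rhoMat n d * bMat n d * (rhoMat n d)⁻¹ * (bMat n d)⁻¹) =
      2 + 4 * Complex.sin (π / n) ^ 4 * (Complex.cosh d ^ 2 - 1) := by
  rw [trace_mul_mul_inv_mul_inv_fin_two (det_rhoMat n d) (det_bMat n d), trace_rhoMat,
    trace_bMat, trace_rhoMat_mul_bMat]
  linear_combination 4 * (Complex.sin ((π : ℂ) / n) ^ 2 + 1 - Complex.cos ((π : ℂ) / n) ^ 2) *
    Complex.cos_sq_add_sin_sq ((π : ℂ) / n)

end FigureEight

theorem sin_pi_div_natCast_pos {n : ℕ} (hn : 2 ≤ n) : 0 < Real.sin (π / n) := by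
  have hn' : (1 : ℝ) < n := by exact_mod_cast hn
  exact Real.sin_pos_of_pos_of_lt_pi (by positivity) (div_lt_self Real.pi_pos hn')

theorem cotPi_mul_sin {n : ℕ} (hn : 2 ≤ n) : cotPi n * Real.sin (π / n) = Real.cos (π / n) :=
  div_mul_cancel₀ _ (sin_pi_div_natCast_pos hn).ne'

theorem one_le_cotPi {n : ℕ} (hn : 4 ≤ n) : 1 ≤ cotPi n := by
  have hn' : (4 : ℝ) ≤ n := by exact_mod_cast hn
  have hle : π / n ≤ π / 4 := div_le_div_of_nonneg_left Real.pi_pos.le (by norm_num) hn'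
  have hsin_le_cos : Real.sin (π / n) ≤ Real.cos (π / n) := by
    rw [← Real.sin_pi_div_two_sub]
    have hpos : 0 < π / n := by positivity
    apply Real.sin_le_sin_of_le_of_le_pi_div_two <;> linarith
  exact (one_le_div (sin_pi_div_natCast_pos (by omega))).2 hsin_le_cos

theorem norm_two_add_four_mul_pow_four_mul_sq_sub_one_sub_ofReal (s k t lam : ℝ)
    (hks : (k * s) ^ 2 + s ^ 2 = 1) (ht : t ^ 2 = 3 * k ^ 4 + 14 * k ^ 2 - 5) :
    ‖2 + 4 * (s : ℂ) ^ 4 * (((1 / 4) * (1 + (k : ℂ) ^ 2 - I * t)) ^ 2 - 1) - lam‖ =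
      Real.sqrt ((lam ^ 2 - 3 * lam + 3) + 4 * (lam - 1) * s ^ 2) := by
  have hksC : ((k : ℂ) * s) ^ 2 + (s : ℂ) ^ 2 = 1 := by exact_mod_cast hks
  have htC : (t : ℂ) ^ 2 = 3 * (k : ℂ) ^ 4 + 14 * (k : ℂ) ^ 2 - 5 := by exact_mod_cast ht
  have hparts : 2 + 4 * (s : ℂ) ^ 4 * (((1 / 4) * (1 + (k : ℂ) ^ 2 - I * t)) ^ 2 - 1) - lam =
      ((3 / 2 - 2 * s ^ 2 - lam : ℝ) : ℂ) + ((-(s ^ 2 * t / 2)) : ℝ) * I := by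
    push_cast
    linear_combination (s : ℂ) ^ 4 * (t : ℂ) ^ 2 / 4 * I_sq - (s : ℂ) ^ 4 / 4 * htC +
      (-I * (s : ℂ) ^ 2 * t / 2 - (((k : ℂ) * s) ^ 2 + (s : ℂ) ^ 2 + 1) / 2 - 2 * (s : ℂ) ^ 2) * hksC
  rw [hparts, Complex.norm_def, Complex.normSq_add_mul_I]
  congr 1
  linear_combination s ^ 4 / 4 * ht + (3 / 4 + 11 / 4 * s ^ 2 + 3 / 4 * (k * s) ^ 2) * hks

theorem abs_trace_comm_sub_lambda (n : ℕ) (hn : 4 ≤ n) (d : ℂ)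
    (hd : Complex.cosh d =
      (1 / 4) * (1 + (cotPi n : ℂ) ^ 2 -
        Complex.I * (Real.sqrt (3 * (cotPi n) ^ 4 + 14 * (cotPi n) ^ 2 - 5) : ℝ)))
    (lam : ℝ) :
    ‖
        (Matrix.trace (rhoMat n d * bMat n d * (rhoMat n d)⁻¹ * (bMat n d)⁻¹) - (lam : ℂ))‖ =
      Real.sqrt ((lam ^ 2 - 3 * lam + 3) + 4 * (lam - 1) * (Real.sin (Real.pi / n)) ^ 2) := by
  have hk := one_le_cotPi hn
  have hks : (cotPi n * Real.sin (π / n)) ^ 2 + Real.sin (π / n) ^ 2 = 1 := by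
    rw [cotPi_mul_sin (by omega), Real.cos_sq_add_sin_sq]
  have hdisc : 0 ≤ 3 * cotPi n ^ 4 + 14 * cotPi n ^ 2 - 5 := by nlinarith
  have hsin : Complex.sin (π / n) = (Real.sin (π / n) : ℂ) := by push_cast; ring
  rw [trace_rhoMat_mul_bMat_mul_inv_mul_inv, hd, hsin]
  exact norm_two_add_four_mul_pow_four_mul_sq_sub_one_sub_ofReal _ _ _ lam hks (Real.sq_sqrt hdisc)
end
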